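/- arXiv:1902.10284 — 3 statements merged into one kernel-verified Lean document; each statement's English description precedes it below -/
import Mathlib

section
/- Let n, m be positive integers and let r_1, ..., r_n be real labels taking exactly m distinct values a_1, ..., a_m (each value attained by at least one label). Define the matrix Δ̄^{1/2} ∈ S^m by (Δ̄^{1/2})_{ij} = |a_i - a_j| for i ≠ j and 0 on the diagonal, and let μ₀ be the smallest eigenvalue of the symmetric matrix -(1/2) J_m Δ̄^{1/2} J_m, where J_m = I_m - (1/m)𝟏𝟏^T. If β ≥ -4μ₀, then the symmetric matrix D ∈ S^n defined by D_{ij} = (|r_i - r_j| + β)^2 if r_i ≠ r_j and D_{ij} = 0 otherwise, is a Euclidean distance matrix: there exist an integer s ≥ 1 and points y_1, ..., y_n ∈ ℝ^s such that ‖y_i - y_j‖^2 = D_{ij} for all i, j. -/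
open Matrix

/-- The centering matrix `J = I - (1/k) 𝟏𝟏ᵀ`. -/
noncomputable def centeringMatrix (k : ℕ) : Matrix (Fin k) (Fin k) ℝ :=
  1 - (k : ℝ)⁻¹ • Matrix.of (fun _ _ => (1 : ℝ))

/-- The double-centered matrix `B(C) = -(1/2) J C J`. -/
noncomputable def doubleCenter {k : ℕ} (C : Matrix (Fin k) (Fin k) ℝ) :
    Matrix (Fin k) (Fin k) ℝ :=
  (-(1/2) : ℝ) • (centeringMatrix k * C * centeringMatrix k)

/-- `D` is a (squared) Euclidean distance matrix: there are an integer `s ≥ 1` and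
points `y_1, …, y_n ∈ ℝ^s` with `D i j = ‖y i - y j‖²` for all `i, j`. -/
def IsEDM {n : ℕ} (D : Matrix (Fin n) (Fin n) ℝ) : Prop :=
  ∃ s : ℕ, 1 ≤ s ∧ ∃ y : Fin n → EuclideanSpace ℝ (Fin s),
    ∀ i j, D i j = ‖y i - y j‖ ^ 2

/-!
The all-ones vector lies in the kernel of `J_m`, hence of `-(1/2) J_m Δ̄^{1/2} J_m`, so `μ₀ ≤ 0`
and `β ≥ 0`. For distinct labels `(|x - y| + β)² = (x - y)² + 2β |x - y| + β²`, and each summand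
is a squared Euclidean distance between the labels: `(x - y)²` on the line, `|x - y|` through the
cut embedding `x ↦ (√(v - v⁻) · [v ≤ x])_{v ∈ V}` of the label set `V` (with `v⁻` the predecessor
of `v` in `V`, so that squared differences telescope to `|x - y|`), and `β²` through the simplex
`x ↦ (β / √2) e_x`. Concatenating the three coordinate vectors gives the points.
-/

open Finset

noncomputable def predIn {α : Type*} [LinearOrder α] (V : Finset α) (x : α) : α :=
  if h : {v ∈ V | v < x}.Nonempty then {v ∈ V | v < x}.max' h else x

section predIn

variable {α : Type*} [LinearOrder α] {V : Finset α} {v x y : α}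

lemma predIn_le (V : Finset α) (x : α) : predIn V x ≤ x := by
  unfold predIn
  split_ifs with h
  · exact (max'_lt_iff _ h).mpr (fun y hy => (mem_filter.mp hy).2) |>.le
  · exact le_rfl

lemma le_predIn (hv : v ∈ V) (hvx : v < x) : v ≤ predIn V x := by
  have hmem : v ∈ {v ∈ V | v < x} := mem_filter.mpr ⟨hv, hvx⟩
  rw [predIn, dif_pos ⟨v, hmem⟩]
  exact le_max' _ _ hmem

lemma predIn_mem (hv : v ∈ V) (hvx : v < x) : predIn V x ∈ V := by
  have hne : {v ∈ V | v < x}.Nonempty := ⟨v, mem_filter.mpr ⟨hv, hvx⟩⟩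
  rw [predIn, dif_pos hne]
  exact (mem_filter.mp (max'_mem _ hne)).1

lemma predIn_lt (hv : v ∈ V) (hvx : v < x) : predIn V x < x := by
  have hne : {v ∈ V | v < x}.Nonempty := ⟨v, mem_filter.mpr ⟨hv, hvx⟩⟩
  rw [predIn, dif_pos hne]
  exact (max'_lt_iff _ hne).mpr (fun y hy => (mem_filter.mp hy).2)

lemma sum_sub_predIn_of_le [AddCommGroup α] (hx : x ∈ V) (hy : y ∈ V) (hyx : y ≤ x) :
    ∑ v ∈ V with y < v ∧ v ≤ x, (v - predIn V v) = x - y := by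
  revert hyx
  refine (V.finite_toSet.wellFoundedOn (r := (· < ·))).induction
    (P := fun x => y ≤ x → ∑ v ∈ V with y < v ∧ v ≤ x, (v - predIn V v) = x - y) hx ?_
  intro x hx ih hyx
  rcases hyx.eq_or_lt with rfl | hyx
  · rw [filter_false_of_mem fun v _ h => (h.1.trans_le h.2).false, sum_empty, sub_self]
  set p := predIn V x
  have hsplit : {v ∈ V | y < v ∧ v ≤ x} = insert x {v ∈ V | y < v ∧ v ≤ p} := by
    ext v
    simp only [mem_insert, mem_filter]
    constructor
    · rintro ⟨hv, hyv, hvx⟩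
      exact hvx.eq_or_lt.imp id fun h => ⟨hv, hyv, le_predIn hv h⟩
    · rintro (rfl | ⟨hv, hyv, hvp⟩)
      · exact ⟨hx, hyx, le_rfl⟩
      · exact ⟨hv, hyv, hvp.trans (predIn_le V x)⟩
  have hx_notMem : x ∉ {v ∈ V | y < v ∧ v ≤ p} := fun h =>
    (mem_filter.mp h).2.2.not_gt (predIn_lt hy hyx)
  rw [hsplit, sum_insert hx_notMem,
    ih p (predIn_mem hy hyx) (predIn_lt hy hyx) (le_predIn hy hyx), sub_add_sub_cancel]

end predIn

noncomputable def cutCoord (V : Finset ℝ) (x v : ℝ) : ℝ :=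
  if v ≤ x then √(v - predIn V v) else 0

lemma sum_sq_sub_cutCoord_of_le {V : Finset ℝ} {x y : ℝ} (hx : x ∈ V) (hy : y ∈ V)
    (hyx : y ≤ x) : ∑ v ∈ V, (cutCoord V x v - cutCoord V y v) ^ 2 = x - y := by
  have hterm : ∀ v, (cutCoord V x v - cutCoord V y v) ^ 2
      = if y < v ∧ v ≤ x then v - predIn V v else 0 := by
    intro v
    have hgap : 0 ≤ v - predIn V v := sub_nonneg.mpr (predIn_le V v)
    unfold cutCoord
    by_cases hvy : v ≤ y
    · simp [hvy, hvy.trans hyx]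
    · by_cases hvx : v ≤ x <;> simp [hvy, hvx, lt_of_not_ge hvy, Real.sq_sqrt hgap]
  simp_rw [hterm, ← sum_filter]
  exact sum_sub_predIn_of_le hx hy hyx

lemma sum_sq_sub_cutCoord {V : Finset ℝ} {x y : ℝ} (hx : x ∈ V) (hy : y ∈ V) :
    ∑ v ∈ V, (cutCoord V x v - cutCoord V y v) ^ 2 = |x - y| := by
  rcases le_total y x with hyx | hxy
  · rw [sum_sq_sub_cutCoord_of_le hx hy hyx, abs_of_nonneg (sub_nonneg.mpr hyx)]
  · simp_rw [← neg_sub (cutCoord V y _), neg_sq]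
    rw [sum_sq_sub_cutCoord_of_le hy hx hxy, abs_of_nonpos (sub_nonpos.mpr hxy), neg_sub]

lemma sum_sq_sub_ite_eq {α : Type*} [DecidableEq α] {V : Finset α} {x y : α} (hx : x ∈ V)
    (hy : y ∈ V) (c : ℝ) :
    ∑ v ∈ V, ((if v = x then c else 0) - (if v = y then c else 0)) ^ 2
      = if x = y then 0 else 2 * c ^ 2 := by
  by_cases hxy : x = y
  · simp [hxy]
  have hterm : ∀ v, ((if v = x then c else 0) - (if v = y then c else 0)) ^ 2
      = (if v = x then c ^ 2 else 0) + (if v = y then c ^ 2 else 0) := by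
    intro v
    by_cases hvx : v = x
    · simp [hvx, hxy]
    · by_cases hvy : v = y <;> simp [hvx, hvy, Ne.symm hxy]
  simp_rw [hterm, sum_add_distrib, sum_ite_eq', if_pos hx, if_pos hy, if_neg hxy]
  ring

lemma isEDM_of_sum_sq {n : ℕ} {ι : Type*} [Fintype ι] [Nonempty ι]
    {D : Matrix (Fin n) (Fin n) ℝ} (f : Fin n → ι → ℝ)
    (hD : ∀ i j, D i j = ∑ k, (f i k - f j k) ^ 2) : IsEDM D := by
  let e := Fintype.equivFin ι
  refine ⟨Fintype.card ι, Fintype.card_pos, fun i => WithLp.toLp 2 (f i ∘ e.symm), fun i j => ?_⟩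
  rw [EuclideanSpace.real_norm_sq_eq, hD]
  exact (e.symm.sum_comp fun k => (f i k - f j k) ^ 2).symm

lemma isEDM_sq_abs_sub_add {n : ℕ} (r : Fin n → ℝ) {β : ℝ} (hβ : 0 ≤ β)
    {D : Matrix (Fin n) (Fin n) ℝ}
    (hD : ∀ i j, D i j = if r i = r j then 0 else (|r i - r j| + β) ^ 2) : IsEDM D := by
  classical
  set V := univ.image r
  have hr : ∀ i, r i ∈ V := fun i => mem_image_of_mem r (mem_univ i)
  refine isEDM_of_sum_sq (ι := Unit ⊕ V ⊕ V)
    (fun i => Sum.elim (fun _ => r i) (Sum.elim (fun v => √(2 * β) * cutCoord V (r i) v)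
      (fun v => if (v : ℝ) = r i then β / √2 else 0))) fun i j => ?_
  have hcut := sum_sq_sub_cutCoord (hr i) (hr j)
  have hsimplex := sum_sq_sub_ite_eq (hr i) (hr j) (β / √2)
  rw [← sum_coe_sort] at hcut hsimplex
  simp only [Fintype.sum_sum_type, Fintype.sum_unique, Sum.elim_inl, Sum.elim_inr,
    ← mul_sub, mul_pow, ← mul_sum, Real.sq_sqrt (by positivity : 0 ≤ 2 * β), hcut, hsimplex, hD]
  split_ifs with hij
  · simp [hij]
  · rw [div_pow, Real.sq_sqrt zero_le_two, ← sq_abs (r i - r j)]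
    ring

lemma centeringMatrix_mulVec_one (k : ℕ) : centeringMatrix k *ᵥ 1 = 0 := by
  funext j
  have hk : (k : ℝ) ≠ 0 := Nat.cast_ne_zero.mpr (Fin.pos j).ne'
  rw [centeringMatrix, sub_mulVec, one_mulVec, smul_mulVec]
  simp [mulVec, dotProduct, hk]

lemma doubleCenter_mulVec_one {k : ℕ} (C : Matrix (Fin k) (Fin k) ℝ) :
    doubleCenter C *ᵥ 1 = 0 := by
  rw [doubleCenter, smul_mulVec, ← mulVec_mulVec, centeringMatrix_mulVec_one, mulVec_zero,
    smul_zero]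

lemma Matrix.IsHermitian.exists_eigenvalues_eq_zero {ι : Type*} [Fintype ι] [DecidableEq ι]
    {A : Matrix ι ι ℝ} (hA : A.IsHermitian) {v : ι → ℝ} (hv : v ≠ 0) (hAv : A *ᵥ v = 0) :
    ∃ t, hA.eigenvalues t = 0 := by
  have hdet : A.det = 0 := exists_mulVec_eq_zero_iff.mp ⟨v, hv, hAv⟩
  simpa [hA.det_eq_prod_eigenvalues, prod_eq_zero_iff] using hdet

theorem stmt0_general (n m : ℕ) (hm : 0 < m)
    (r : Fin n → ℝ)
    (Δhalf : Matrix (Fin m) (Fin m) ℝ)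
    (hHerm : (doubleCenter Δhalf).IsHermitian)
    (μ₀ : ℝ) (hμ₀ : μ₀ = ⨅ t, hHerm.eigenvalues t)
    (β : ℝ) (hβ : β ≥ -4 * μ₀)
    (D : Matrix (Fin n) (Fin n) ℝ)
    (hD : ∀ i j, D i j = if r i = r j then 0 else (|r i - r j| + β) ^ 2) :
    IsEDM D := by
  have hone : (1 : Fin m → ℝ) ≠ 0 := fun h => one_ne_zero (congrFun h ⟨0, hm⟩)
  obtain ⟨t, ht⟩ := hHerm.exists_eigenvalues_eq_zero hone (doubleCenter_mulVec_one Δhalf)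
  have hμ₀_nonpos : μ₀ ≤ 0 := hμ₀ ▸ ht ▸ ciInf_le (Finite.bddBelow_range _) t
  exact isEDM_sq_abs_sub_add r (by linarith) hD

theorem stmt0 (n m : ℕ) (hn : 0 < n) (hm : 0 < m)
    (r : Fin n → ℝ) (a : Fin m → ℝ)
    (ha : Function.Injective a)
    (hcover : ∀ i, ∃ t, r i = a t)
    (hattain : ∀ t, ∃ i, r i = a t)
    (Δhalf : Matrix (Fin m) (Fin m) ℝ)
    (hΔhalf : ∀ t u, Δhalf t u = |a t - a u|)
    (hHerm : (doubleCenter Δhalf).IsHermitian)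
    (μ₀ : ℝ) (hμ₀ : μ₀ = ⨅ t, hHerm.eigenvalues t)
    (β : ℝ) (hβ : β ≥ -4 * μ₀)
    (D : Matrix (Fin n) (Fin n) ℝ)
    (hD : ∀ i j, D i j = if r i = r j then 0 else (|r i - r j| + β) ^ 2) :
    IsEDM D :=
  stmt0_general n m hm r Δhalf hHerm μ₀ hμ₀ β hβ D hD
end

section
/- Let n, m be positive integers and let r_1, ..., r_n be real labels taking exactly m distinct values a_1, ..., a_m (each value attained by at least one label). Fix β ∈ ℝ. Define D ∈ S^n by D_{ij} = (|r_i - r_j| + β)^2 if r_i ≠ r_j and D_{ij} = 0 otherwise, and define Δ ∈ S^m by Δ_{ij} = (|a_i - a_j| + β)^2 if i ≠ j and Δ_{ii} = 0. Then D is a Euclidean distance matrix if and only if Δ is a Euclidean distance matrix. -/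
open Matrix

theorem IsEDM.submatrix {n k : ℕ} {D : Matrix (Fin n) (Fin n) ℝ} (hD : IsEDM D)
    (f : Fin k → Fin n) : IsEDM (D.submatrix f f) := by
  obtain ⟨s, hs, y, hy⟩ := hD
  exact ⟨s, hs, y ∘ f, fun i j => hy (f i) (f j)⟩

theorem isEDM_iff_of_eq_submatrix {n m : ℕ} {D : Matrix (Fin n) (Fin n) ℝ}
    {Δ : Matrix (Fin m) (Fin m) ℝ} (f : Fin n → Fin m) (g : Fin m → Fin n)
    (hf : D = Δ.submatrix f f) (hg : Δ = D.submatrix g g) : IsEDM D ↔ IsEDM Δ :=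
  ⟨fun h => hg ▸ h.submatrix g, fun h => hf ▸ h.submatrix f⟩

theorem stmt1_general (n m : ℕ)
    (r : Fin n → ℝ) (a : Fin m → ℝ)
    (ha : Function.Injective a)
    (hcover : ∀ i, ∃ t, r i = a t)
    (hattain : ∀ t, ∃ i, r i = a t)
    (β : ℝ)
    (D : Matrix (Fin n) (Fin n) ℝ)
    (hD : ∀ i j, D i j = if r i = r j then 0 else (|r i - r j| + β) ^ 2)
    (Δ : Matrix (Fin m) (Fin m) ℝ)
    (hΔ : ∀ t u, Δ t u = if t = u then 0 else (|a t - a u| + β) ^ 2) :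
    IsEDM D ↔ IsEDM Δ := by
  choose τ hτ using hcover
  choose σ hσ using hattain
  refine isEDM_iff_of_eq_submatrix τ σ ?_ ?_ <;> ext i j
  · simp only [submatrix_apply, hD, hΔ, hτ, ha.eq_iff]
  · simp only [submatrix_apply, hD, hΔ, hσ, ha.eq_iff]

theorem stmt1 (n m : ℕ) (hn : 0 < n) (hm : 0 < m)
    (r : Fin n → ℝ) (a : Fin m → ℝ)
    (ha : Function.Injective a)
    (hcover : ∀ i, ∃ t, r i = a t)
    (hattain : ∀ t, ∃ i, r i = a t)
    (β : ℝ)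
    (D : Matrix (Fin n) (Fin n) ℝ)
    (hD : ∀ i j, D i j = if r i = r j then 0 else (|r i - r j| + β) ^ 2)
    (Δ : Matrix (Fin m) (Fin m) ℝ)
    (hΔ : ∀ t u, Δ t u = if t = u then 0 else (|a t - a u| + β) ^ 2) :
    IsEDM D ↔ IsEDM Δ :=
  stmt1_general n m r a ha hcover hattain β D hD Δ hΔ
end

section
/- Let n, m be positive integers, let r_1, ..., r_n be real labels taking exactly m distinct values a_1, ..., a_m, and let g : {1, ..., n} → {1, ..., m} be the map with r_i = a_{g(i)} for every i. Fix β ∈ ℝ, define Δ ∈ S^m by Δ_{tu} = (|a_t - a_u| + β)^2 for t ≠ u and Δ_{tt} = 0, and define D ∈ S^n by D_{ij} = (|r_i - r_j| + β)^2 if r_i ≠ r_j and D_{ij} = 0 otherwise. Suppose z_1, ..., z_m ∈ ℝ^{s} are points with ‖z_t - z_u‖^2 = Δ_{tu} for all t, u. Define ỹ_i := z_{g(i)} for i = 1, ..., n, let ȳ := (1/n) (ỹ_1 + ... + ỹ_n), and set y_i := ỹ_i - ȳ. Then y_1 + ... + y_n = 0 and ‖y_i - y_j‖^2 = D_{ij}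 for all i, j. -/
open Matrix

theorem Finset.sum_sub_inv_card_smul_sum {ι 𝕜 E : Type*} [Fintype ι] [DivisionRing 𝕜]
    [CharZero 𝕜] [AddCommGroup E] [Module 𝕜 E] (x : ι → E) :
    ∑ i, (x i - (Fintype.card ι : 𝕜)⁻¹ • ∑ j, x j) = 0 := by
  rcases isEmpty_or_nonempty ι with _ | _
  · exact Finset.sum_of_isEmpty _
  have hcard : (Fintype.card ι : 𝕜) ≠ 0 := Nat.cast_ne_zero.mpr Fintype.card_ne_zero
  rw [Finset.sum_sub_distrib, Finset.sum_const, Finset.card_univ, ← Nat.cast_smul_eq_nsmul 𝕜,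
    smul_smul, mul_inv_cancel₀ hcard, one_smul, sub_self]

theorem stmt10_general (n m s : ℕ)
    (r : Fin n → ℝ) (a : Fin m → ℝ)
    (ha : Function.Injective a)
    (g : Fin n → Fin m)
    (hg : ∀ i, r i = a (g i))
    (β : ℝ)
    (Δ : Matrix (Fin m) (Fin m) ℝ)
    (hΔ : ∀ t u, Δ t u = if t = u then 0 else (|a t - a u| + β) ^ 2)
    (D : Matrix (Fin n) (Fin n) ℝ)
    (hD : ∀ i j, D i j = if r i = r j then 0 else (|r i - r j| + β) ^ 2)
    (z : Fin m → EuclideanSpace ℝ (Fin s))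
    (hz : ∀ t u, ‖z t - z u‖ ^ 2 = Δ t u)
    (ybar : EuclideanSpace ℝ (Fin s))
    (hybar : ybar = (n : ℝ)⁻¹ • ∑ i, z (g i))
    (y : Fin n → EuclideanSpace ℝ (Fin s))
    (hy : ∀ i, y i = z (g i) - ybar) :
    (∑ i, y i = 0) ∧ ∀ i j, ‖y i - y j‖ ^ 2 = D i j := by
  constructor
  · simpa only [hy, hybar, Fintype.card_fin] using
      Finset.sum_sub_inv_card_smul_sum (𝕜 := ℝ) (fun i ↦ z (g i))
  · intro i j
    rw [hy, hy, sub_sub_sub_cancel_right, hz, hΔ, hD, hg, hg]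
    simp only [ha.eq_iff]

theorem stmt10 (n m s : ℕ) (hn : 0 < n) (hm : 0 < m)
    (r : Fin n → ℝ) (a : Fin m → ℝ)
    (ha : Function.Injective a)
    (g : Fin n → Fin m)
    (hg : ∀ i, r i = a (g i))
    (hgsurj : Function.Surjective g)
    (β : ℝ)
    (Δ : Matrix (Fin m) (Fin m) ℝ)
    (hΔ : ∀ t u, Δ t u = if t = u then 0 else (|a t - a u| + β) ^ 2)
    (D : Matrix (Fin n) (Fin n) ℝ)
    (hD : ∀ i j, D i j = if r i = r j then 0 else (|r i - r j| + β) ^ 2)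
    (z : Fin m → EuclideanSpace ℝ (Fin s))
    (hz : ∀ t u, ‖z t - z u‖ ^ 2 = Δ t u)
    (ybar : EuclideanSpace ℝ (Fin s))
    (hybar : ybar = (n : ℝ)⁻¹ • ∑ i, z (g i))
    (y : Fin n → EuclideanSpace ℝ (Fin s))
    (hy : ∀ i, y i = z (g i) - ybar) :
    (∑ i, y i = 0) ∧ ∀ i j, ‖y i - y j‖ ^ 2 = D i j :=
  stmt10_general n m s r a ha g hg β Δ hΔ D hD z hz ybar hybar y hy
end
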